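/- Let G and E be divisors on C with deg G ≡ 0 (mod 2), E > 0, and ½·deg G − deg E ≥ 2g; put n = ½·deg G − deg E − g + 1 and n' = ½·deg G − g + 1 = n + deg E. Let ρ : L(G) → k be an E-compression functional, let D be a divisor of degree ½·deg G, and let X be a G-form representing D. Then for any n' × n' permutation matrices P and Q such that in the block decomposition PXQ = [[a, b], [c, d]] (a of size deg E × deg E, d of size n × n) the matrix ρa has nonzero determinant, the matrix z defined by [[w, x], [y, z]] = [[1, 0], [−(ρc)(ρa)⁻¹, 1]]·[[a, b], [c, d]]·[[1, −(ρa)⁻¹(ρb)], [0, 1]] is a (G − 2E)-form representing D − E. (Here ρa, ρb, ρc denote the matrices obtained by applying ρ entrywise.) -/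

import Mathlib

/-- All 2×2 minors of a matrix vanish, i.e. the matrix has rank at most 1. -/
def MinorsVanish {R : Type} [CommRing R] {m n : Type} (M : Matrix m n R) : Prop :=
  ∀ i i' j j', M i j * M i' j' = M i j' * M i' j

/-- A matrix is `k`-general if some row and some column each consist of
`k`-linearly independent entries. -/
def KGeneral (k : Type) [Field k] {V : Type} [AddCommMonoid V] [Module k V]
    {m n : Type} (M : Matrix m n V) : Prop :=
  (∃ i, LinearIndependent k fun j => M i j) ∧ ∃ j, LinearIndependent k fun i => M i j

/-- Two matrices over a `k`-algebra are `k`-equivalent if `Y = Φ X Ψ` for some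
invertible square matrices `Φ`, `Ψ` with entries in `k`. -/
def KEquivalent (k : Type) [Field k] {A : Type} [CommRing A] [Algebra k A]
    {m n : Type} [Fintype m] [Fintype n] [DecidableEq m] [DecidableEq n]
    (X Y : Matrix m n A) : Prop :=
  ∃ (Φ : Matrix m m k) (Ψ : Matrix n n k), IsUnit Φ.det ∧ IsUnit Ψ.det ∧
    Y = Φ.map (algebraMap k A) * X * Ψ.map (algebraMap k A)

/-- An abstraction of a nonsingular projective curve `C` of genus `g` over an
algebraically closed field `k`, packaged together with its function field `F = k(C)`,
the divisor `div f` of a nonzero rational function (divisors are finitely supported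
`ℤ`-valued functions on the points of `C`), the Riemann–Roch spaces
`L(D) = {f : f = 0 ∨ div f + D ≥ 0}`, the rings `R_E` of functions regular near the
support of a divisor and the ideals `I_E` of functions vanishing to order at least `E`,
subject to the standard facts about them (including the Riemann–Roch theorem). -/
structure AbstractCurve (k : Type) [Field k] : Type 1 where
  /-- the points of the curve -/
  Point : Type
  /-- the function field `k(C)` -/
  F : Type
  [fieldF : Field F]
  [algF : Algebra k F]
  /-- the genus of the curve -/
  genus : ℕ
  /-- `divOf f` is the divisor of zeros and poles of `f` (junk value `0` at `f = 0`);
  its value at a point `p` is the order of vanishing of `f` at `p`. -/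
  divOf : F → (Point →₀ ℤ)
  divOf_mul : ∀ f g : F, f ≠ 0 → g ≠ 0 → divOf (f * g) = divOf f + divOf g
  divOf_algebraMap : ∀ c : k, c ≠ 0 → divOf (algebraMap k F c) = 0
  divOf_eq_zero_iff : ∀ f : F, f ≠ 0 →
    (divOf f = 0 ↔ ∃ c : k, c ≠ 0 ∧ f = algebraMap k F c)
  /-- a principal divisor has degree zero -/
  deg_divOf : ∀ f : F, f ≠ 0 → (divOf f).sum (fun _ n => n) = 0
  /-- the Riemann–Roch space `L(D)` as a `k`-subspace of the function field -/
  RR : (Point →₀ ℤ) → Submodule k F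
  mem_RR : ∀ (D : Point →₀ ℤ) (f : F), f ∈ RR D ↔ f = 0 ∨ 0 ≤ divOf f + D
  finite_RR : ∀ D : Point →₀ ℤ, Module.Finite k (RR D)
  /-- the Riemann–Roch theorem: `ℓ(D) = deg D - g + 1` whenever `deg D > 2g - 2` -/
  rank_RR : ∀ D : Point →₀ ℤ, 2 * (genus : ℤ) - 2 < D.sum (fun _ n => n) →
    (Module.finrank k (RR D) : ℤ) = D.sum (fun _ n => n) - genus + 1
  /-- the `k`-space `R_E` of functions regular in a neighborhood of the support of `E` -/
  Reg : (Point →₀ ℤ) → Submodule k F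
  mem_Reg : ∀ (E : Point →₀ ℤ) (f : F),
    f ∈ Reg E ↔ f = 0 ∨ ∀ p ∈ E.support, 0 ≤ divOf f p
  /-- the `k`-space `I_E ⊆ R_E` of functions vanishing to order at least `E` -/
  VanishIdeal : (Point →₀ ℤ) → Submodule k F
  mem_VanishIdeal : ∀ (E : Point →₀ ℤ) (f : F),
    f ∈ VanishIdeal E ↔ f = 0 ∨ ∀ p ∈ E.support, E p ≤ divOf f p

namespace AbstractCurve

attribute [instance] fieldF algF

variable {k : Type} [Field k]

/-- The degree of a divisor. -/
def deg (C : AbstractCurve k) (D : C.Point →₀ ℤ) : ℤ := D.sum fun _ n => n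

/-- Linear equivalence of divisors: `D ~ D'` iff `D' = D + div f` for some `f ≠ 0`. -/
def LinEquiv (C : AbstractCurve k) (D D' : C.Point →₀ ℤ) : Prop :=
  ∃ f : C.F, f ≠ 0 ∧ D' = D + C.divOf f

/-- A `G`-form: a square matrix with entries in `L(G)`, all of whose 2×2 minors vanish,
and which is `k`-general.  (In context its size is `n = ½ deg G - g + 1`.) -/
def IsGForm (C : AbstractCurve k) (G : C.Point →₀ ℤ) {n : ℕ}
    (X : Matrix (Fin n) (Fin n) C.F) : Prop :=
  (∀ i j, X i j ∈ C.RR G) ∧ MinorsVanish X ∧ KGeneral k X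

/-- The `G`-form `X` represents the divisor `D` (of degree `½ deg G`): `X = u v` where
the entries of the column vector `u` form a `k`-basis of `L(D)` and the entries of the
row vector `v` form a `k`-basis of `L(G - D)`. -/
def Represents (C : AbstractCurve k) (G D : C.Point →₀ ℤ) {n : ℕ}
    (X : Matrix (Fin n) (Fin n) C.F) : Prop :=
  ∃ u v : Fin n → C.F,
    LinearIndependent k u ∧ Submodule.span k (Set.range u) = C.RR D ∧
    LinearIndependent k v ∧ Submodule.span k (Set.range v) = C.RR (G - D) ∧
    ∀ i j, X i j = u i * v j

/-- An `E`-compression functional `ρ : L(G) → k` (realized as a `k`-linear functional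
on the function field): `ρ` kills `L(G - E)`, and for every divisor `D` of degree
`½ deg G` the induced pairing `(a, b) ↦ ρ(ab)` on
`L(D)/L(D-E) × L(G-D)/L(G-D-E)` is a perfect pairing of `(deg E)`-dimensional
`k`-vector spaces (expressed by nondegeneracy on both sides together with both
quotients having dimension `deg E`). -/
def IsCompression (C : AbstractCurve k) (G E : C.Point →₀ ℤ) (ρ : C.F →ₗ[k] k) : Prop :=
  (∀ f ∈ C.RR (G - E), ρ f = 0) ∧
  ∀ D : C.Point →₀ ℤ, 2 * C.deg D = C.deg G →
    (∀ a ∈ C.RR D, (∀ b ∈ C.RR (G - D), ρ (a * b) = 0) → a ∈ C.RR (D - E)) ∧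
    (∀ b ∈ C.RR (G - D), (∀ a ∈ C.RR D, ρ (a * b) = 0) → b ∈ C.RR (G - D - E)) ∧
    (Module.finrank k
      (C.RR D ⧸ Submodule.comap (C.RR D).subtype (C.RR (D - E))) : ℤ) = C.deg E ∧
    (Module.finrank k
      (C.RR (G - D) ⧸
        Submodule.comap (C.RR (G - D)).subtype (C.RR (G - D - E))) : ℤ) = C.deg E

end AbstractCurve
/-- View an `N × N` matrix, `N = e + n`, as a block matrix indexed by `Fin e ⊕ Fin n`
(upper-left block of size `e × e`, lower-right block of size `n × n`). -/
def asBlocks {R : Type} {N e n : ℕ} (h : N = e + n)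
    (M : Matrix (Fin N) (Fin N) R) : Matrix (Fin e ⊕ Fin n) (Fin e ⊕ Fin n) R :=
  M.submatrix (fun p => (finCongr h.symm) (finSumFinEquiv p))
    (fun p => (finCongr h.symm) (finSumFinEquiv p))

/-- Given a block decomposition `[[a, b], [c, d]]` of `M` (with `N = e + n`), the
compressed block
`z` from `[[w, x], [y, z]] = [[1, 0], [-(ρc)(ρa)⁻¹, 1]] · [[a, b], [c, d]] · [[1, -(ρa)⁻¹(ρb)], [0, 1]]`,
where `ρ` is applied entrywise to the blocks `a`, `b`, `c`. -/
noncomputable def compressedBlock {k : Type} [Field k] {F : Type} [Field F] [Algebra k F]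
    {N e n : ℕ} (h : N = e + n) (M : Matrix (Fin N) (Fin N) F) (ρ : F →ₗ[k] k) :
    Matrix (Fin n) (Fin n) F :=
  let B := asBlocks h M
  let a := B.toBlocks₁₁
  let b := B.toBlocks₁₂
  let c := B.toBlocks₂₁
  ((Matrix.fromBlocks 1 0 (-(c.map ρ * (a.map ρ)⁻¹)) 1).map (algebraMap k F) * B *
    (Matrix.fromBlocks 1 (-((a.map ρ)⁻¹ * b.map ρ)) 0 1).map (algebraMap k F)).toBlocks₂₂

/-!
Write `X = u v` with `u`, `v` bases of `L(D)`, `L(G - D)`, and split `u = (u₁, u₂)`,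
`v = (v₁, v₂)` along the blocks. The two elementary block operations only recombine the
entries of `u` and of `v`, so `z = U V` is again of rank one, with
`U = u₂ - (ρc)(ρa)⁻¹ u₁` and `V = v₂ - v₁ (ρa)⁻¹(ρb)`; this choice makes `ρ(U v₁) = 0` and
`ρ(u₁ V) = 0`. Since `ρa` is invertible and `L(G - D) / L(G - D - E)` has dimension `deg E`,
the entries of `v₁` span `L(G - D)` modulo `L(G - D - E)`, on which `ρ(U ·)` vanishes already;
so `U` pairs to zero with all of `L(G - D)` and lies in `L(D - E)` by perfectness of the pairing.
`U` is independent because `u` is, and has `n = ℓ(D - E)` entries by Riemann–Roch, so it is a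
basis of `L(D - E)`; symmetrically `V` is a basis of `L(G - D - E)`.
-/

open Matrix

theorem LinearIndependent.add_sum_smul_inl {k M ι κ : Type*} [Ring k] [AddCommGroup M]
    [Module k M] [Fintype ι] {u : ι ⊕ κ → M} (hu : LinearIndependent k u) (L : κ → ι → k) :
    LinearIndependent k fun i => u (.inr i) + ∑ j, L i j • u (.inl j) := by
  set S := Submodule.span k (Set.range (u ∘ Sum.inl))
  refine LinearIndependent.of_comp S.mkQ ?_
  have hmod : S.mkQ ∘ (fun i => u (.inr i) + ∑ j, L i j • u (.inl j)) = S.mkQ ∘ (u ∘ Sum.inr) := by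
    funext i
    have hsum : ∑ j, L i j • u (.inl j) ∈ S :=
      Submodule.sum_mem _ fun j _ => Submodule.smul_mem _ _ (Submodule.subset_span ⟨j, rfl⟩)
    simp [(Submodule.Quotient.mk_eq_zero S).2 hsum]
  rw [hmod]
  refine (hu.comp Sum.inr Sum.inr_injective).map ?_
  rw [Submodule.ker_mkQ]
  exact (linearIndependent_sum.1 hu).2.2.symm

theorem Submodule.span_range_eq_of_finrank_le {k M ι : Type*} [DivisionRing k] [AddCommGroup M]
    [Module k M] [Fintype ι] {W : Submodule k M} [FiniteDimensional k W] {x : ι → M}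
    (hx : ∀ i, x i ∈ W) (hli : LinearIndependent k x) (h : Module.finrank k W ≤ Fintype.card ι) :
    span k (Set.range x) = W :=
  eq_of_le_of_finrank_le (span_le.2 (Set.range_subset_iff.2 hx)) (by rwa [finrank_span_eq_card hli])

namespace LinearMap

variable {k M N ι κ : Type*} [Field k] [AddCommGroup M] [Module k M] [AddCommGroup N] [Module k N]
  [Fintype ι] [DecidableEq ι] (B : M →ₗ[k] N →ₗ[k] k)

def pairingMatrix {m n : Type*} (u : m → M) (v : n → N) : Matrix m n k :=
  of fun p q => B (u p) (v q)

theorem pairingMatrix_flip {m n : Type*} (u : m → M) (v : n → N) :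
    B.flip.pairingMatrix v u = (B.pairingMatrix u v)ᵀ :=
  rfl

noncomputable def eliminate (u : ι ⊕ κ → M) (v : ι ⊕ κ → N) (i : κ) : M :=
  u (.inr i) + ∑ j,
    (-((B.pairingMatrix u v).toBlocks₂₁ * (B.pairingMatrix u v).toBlocks₁₁⁻¹)) i j • u (.inl j)

theorem eliminate_apply_inl {u : ι ⊕ κ → M} {v : ι ⊕ κ → N}
    (hdet : (B.pairingMatrix u v).toBlocks₁₁.det ≠ 0) (i : κ) (l : ι) :
    B (B.eliminate u v i) (v (.inl l)) = 0 := by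
  set P := B.pairingMatrix u v
  have hexp : B (B.eliminate u v i) (v (.inl l)) = P (.inr i) (.inl l) -
      ∑ j, (P.toBlocks₂₁ * P.toBlocks₁₁⁻¹) i j * P.toBlocks₁₁ j l := by
    simp [eliminate, P, pairingMatrix, toBlocks₁₁, sub_eq_add_neg]
  rw [hexp, ← Matrix.mul_apply, Matrix.mul_assoc, nonsing_inv_mul _ (isUnit_iff_ne_zero.2 hdet),
    Matrix.mul_one, sub_eq_zero]
  rfl

theorem linearIndependent_eliminate {u : ι ⊕ κ → M} (hu : LinearIndependent k u) (v : ι ⊕ κ → N) :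
    LinearIndependent k (B.eliminate u v) :=
  hu.add_sum_smul_inl _

/-- The `w j` span `W` modulo `W₀`: by `hdet` they are independent there, and there are
`dim (W / W₀)` of them. -/
theorem apply_eq_zero_of_det_ne_zero {W W₀ : Submodule k N} [FiniteDimensional k W]
    (hrank : Module.finrank k (W ⧸ W₀.comap W.subtype) = Fintype.card ι)
    {x : ι → M} (hx : ∀ i, ∀ y ∈ W₀, B (x i) y = 0) {w : ι → N} (hw : ∀ j, w j ∈ W)
    (hdet : (B.pairingMatrix x w).det ≠ 0)
    {m : M} (hm : ∀ y ∈ W₀, B m y = 0) (hmw : ∀ j, B m (w j) = 0) {y : N} (hy : y ∈ W) :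
    B m y = 0 := by
  set K := W₀.comap W.subtype
  let wbar : ι → W ⧸ K := fun j => K.mkQ ⟨w j, hw j⟩
  have hli : LinearIndependent k wbar := by
    rw [Fintype.linearIndependent_iff]
    intro c hc
    have hmem : ∑ j, c j • w j ∈ W₀ := by
      have h0 : K.mkQ (∑ j, c j • (⟨w j, hw j⟩ : W)) = 0 := by
        simpa only [map_sum, map_smul] using hc
      simpa [K] using (Submodule.Quotient.mk_eq_zero K).1 h0
    refine congrFun (eq_zero_of_mulVec_eq_zero hdet (funext fun i => ?_))
    simpa [mulVec, dotProduct, pairingMatrix, mul_comm] using hx i _ hmem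
  have hspan : Submodule.span k (Set.range wbar) = ⊤ :=
    hli.span_eq_top_of_card_eq_finrank' hrank.symm
  let φ : W ⧸ K →ₗ[k] k := K.liftQ ((B m).domRestrict W) fun z hz => hm _ hz
  have hφ : φ = 0 := LinearMap.ext_on_range hspan fun j => hmw j
  exact LinearMap.congr_fun hφ (K.mkQ ⟨y, hy⟩)

end LinearMap

theorem Matrix.toBlocks₂₂_fromBlocks_mul_vecMulVec_mul_fromBlocks {k F m n : Type*} [CommRing k]
    [CommRing F] [Algebra k F] [Fintype m] [Fintype n] [DecidableEq m] [DecidableEq n]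
    (L : Matrix n m k) (R : Matrix m n k) (u v : m ⊕ n → F) :
    ((fromBlocks 1 0 L 1).map (algebraMap k F) * vecMulVec u v *
        (fromBlocks 1 R 0 1).map (algebraMap k F)).toBlocks₂₂ =
      vecMulVec (fun i => u (.inr i) + ∑ j, L i j • u (.inl j))
        (fun j => v (.inr j) + ∑ i, R i j • v (.inl i)) := by
  rw [mul_vecMulVec, vecMulVec_mul]
  ext i j
  simp [toBlocks₂₂, vecMulVec_apply, mulVec, vecMul, dotProduct, Fintype.sum_sum_type,
    Algebra.smul_def, one_apply, mul_comm, add_comm]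

theorem compressedBlock_eq_vecMulVec_eliminate {k F : Type} [Field k] [Field F] [Algebra k F]
    {N e n : ℕ} (h : N = e + n) {M : Matrix (Fin N) (Fin N) F} (ρ : F →ₗ[k] k)
    {u v : Fin e ⊕ Fin n → F} (hM : asBlocks h M = vecMulVec u v) :
    compressedBlock h M ρ = vecMulVec (((LinearMap.mul k F).compr₂ ρ).eliminate u v)
      (((LinearMap.mul k F).compr₂ ρ).flip.eliminate v u) := by
  simp only [compressedBlock, hM, toBlocks₂₂_fromBlocks_mul_vecMulVec_mul_fromBlocks]
  congr
  ext j
  set P := ((LinearMap.mul k F).compr₂ ρ).pairingMatrix u v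
  have h₁₁ : Pᵀ.toBlocks₁₁ = P.toBlocks₁₁ᵀ := rfl
  have h₂₁ : Pᵀ.toBlocks₂₁ = P.toBlocks₁₂ᵀ := rfl
  rw [LinearMap.eliminate, LinearMap.pairingMatrix_flip, h₁₁, h₂₁, ← transpose_nonsing_inv,
    ← transpose_mul]
  rfl

namespace AbstractCurve

variable {k : Type} [Field k] {C : AbstractCurve k}

instance (C : AbstractCurve k) (D : C.Point →₀ ℤ) : FiniteDimensional k (C.RR D) :=
  C.finite_RR D

theorem deg_sub (D D' : C.Point →₀ ℤ) : C.deg (D - D') = C.deg D - C.deg D' :=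
  Finsupp.sum_sub_index fun _ _ _ => rfl

theorem mul_mem_RR {D₁ D₂ : C.Point →₀ ℤ} {f g : C.F} (hf : f ∈ C.RR D₁) (hg : g ∈ C.RR D₂) :
    f * g ∈ C.RR (D₁ + D₂) := by
  rw [C.mem_RR] at hf hg ⊢
  by_cases hf0 : f = 0
  · simp [hf0]
  by_cases hg0 : g = 0
  · simp [hg0]
  right
  rw [C.divOf_mul f g hf0 hg0, add_add_add_comm]
  exact add_nonneg (hf.resolve_left hf0) (hg.resolve_left hg0)

theorem finrank_RR_eq {D : C.Point →₀ ℤ} {m : ℕ} (h : 2 * (C.genus : ℤ) - 2 < C.deg D)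
    (hm : (m : ℤ) = C.deg D - C.genus + 1) : Module.finrank k (C.RR D) = m := by
  have := C.rank_RR D h
  unfold deg at hm
  omega

theorem isGForm_and_represents_vecMulVec {G D : C.Point →₀ ℤ} {n : ℕ} [NeZero n]
    {u v : Fin n → C.F} (hu : LinearIndependent k u) (hsu : Submodule.span k (Set.range u) = C.RR D)
    (hv : LinearIndependent k v) (hsv : Submodule.span k (Set.range v) = C.RR (G - D)) :
    C.IsGForm G (vecMulVec u v) ∧ C.Represents G D (vecMulVec u v) := by
  refine ⟨⟨fun i j => ?_, fun i i' j j' => ?_, ⟨0, ?_⟩, ⟨0, ?_⟩⟩, u, v, hu, hsu, hv, hsv,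
    fun _ _ => rfl⟩
  · simpa [vecMulVec_apply] using mul_mem_RR (hsu ▸ Submodule.subset_span ⟨i, rfl⟩ : u i ∈ C.RR D)
      (hsv ▸ Submodule.subset_span ⟨j, rfl⟩ : v j ∈ C.RR (G - D))
  · simp only [vecMulVec_apply]
    ring
  · exact hv.map' (LinearMap.mulLeft k (u 0)) (LinearMap.ker_eq_bot.2
      (mul_right_injective₀ (hu.ne_zero 0)))
  · exact hu.map' (LinearMap.mulRight k (v 0)) (LinearMap.ker_eq_bot.2
      (mul_left_injective₀ (hv.ne_zero 0)))

theorem IsCompression.apply_mul_eq_zero {G E D₁ D₂ : C.Point →₀ ℤ} {ρ : C.F →ₗ[k] k}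
    (hρ : C.IsCompression G E ρ) (hD : D₁ + D₂ = G - E) {a b : C.F} (ha : a ∈ C.RR D₁)
    (hb : b ∈ C.RR D₂) : ρ (a * b) = 0 :=
  hρ.1 _ (hD ▸ mul_mem_RR ha hb)

theorem IsCompression.eliminate_mem_RR {G E D : C.Point →₀ ℤ} {ρ : C.F →ₗ[k] k}
    {ι κ : Type} [Fintype ι] [DecidableEq ι]
    (hρ : C.IsCompression G E ρ) (hD : 2 * C.deg D = C.deg G) {u v : ι ⊕ κ → C.F}
    (hu : ∀ p, u p ∈ C.RR D) (hv : ∀ p, v p ∈ C.RR (G - D)) (hcard : (Fintype.card ι : ℤ) = C.deg E)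
    (hdet : (((LinearMap.mul k C.F).compr₂ ρ).pairingMatrix u v).toBlocks₁₁.det ≠ 0) :
    (∀ i, ((LinearMap.mul k C.F).compr₂ ρ).eliminate u v i ∈ C.RR (D - E)) ∧
      ∀ j, ((LinearMap.mul k C.F).compr₂ ρ).flip.eliminate v u j ∈ C.RR (G - D - E) := by
  obtain ⟨hnd₁, hnd₂, hrank₁, hrank₂⟩ := hρ.2 D hD
  set B := (LinearMap.mul k C.F).compr₂ ρ
  have hdet' : (B.flip.pairingMatrix v u).toBlocks₁₁.det ≠ 0 := by
    rwa [LinearMap.pairingMatrix_flip, ← det_transpose]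
  have helim {M : Submodule k C.F} {B' : C.F →ₗ[k] C.F →ₗ[k] k} {x y : ι ⊕ κ → C.F}
      (hx : ∀ p, x p ∈ M) (i : κ) : B'.eliminate x y i ∈ M :=
    add_mem (hx _) (Submodule.sum_mem _ fun j _ => Submodule.smul_mem _ _ (hx _))
  constructor
  · refine fun i => hnd₁ _ (helim hu i) fun b hb => B.apply_eq_zero_of_det_ne_zero
      (by exact_mod_cast hrank₂.trans hcard.symm) (x := u ∘ .inl) (fun i y hy => ?_)
      (fun j => hv (.inl j)) hdet (fun y hy => ?_) (B.eliminate_apply_inl hdet i) hb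
    · exact hρ.apply_mul_eq_zero (by abel) (hu _) hy
    · exact hρ.apply_mul_eq_zero (by abel) (helim hu i) hy
  · refine fun j => hnd₂ _ (helim hv j) fun a ha => B.flip.apply_eq_zero_of_det_ne_zero
      (by exact_mod_cast hrank₁.trans hcard.symm) (x := v ∘ .inl) (fun j y hy => ?_)
      (fun i => hu (.inl i)) hdet' (fun y hy => ?_) (B.flip.eliminate_apply_inl hdet' j) ha
    · exact hρ.apply_mul_eq_zero (by abel) hy (hv _)
    · exact hρ.apply_mul_eq_zero (by abel) hy (helim hv j)

end AbstractCurve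

open AbstractCurve in
theorem compression_block_gform_general (k : Type) [Field k]
    (C : AbstractCurve k) (G E : C.Point →₀ ℤ) (s : ℤ)
    (hG : C.deg G = 2 * s)
    (hge : 2 * (C.genus : ℤ) ≤ s - C.deg E)
    (e n n' : ℕ) (he : (e : ℤ) = C.deg E)
    (hn : (n : ℤ) = s - C.deg E - C.genus + 1) (hn' : n' = e + n)
    (ρ : C.F →ₗ[k] k) (hρ : C.IsCompression G E ρ)
    (D : C.Point →₀ ℤ) (hD : C.deg D = s)
    (X : Matrix (Fin n') (Fin n') C.F) (hXD : C.Represents G D X)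
    (σ τ : Equiv.Perm (Fin n'))
    (hdet : ((asBlocks hn' (X.submatrix σ τ)).toBlocks₁₁.map ρ).det ≠ 0) :
    C.IsGForm (G - 2 • E) (compressedBlock hn' (X.submatrix σ τ) ρ) ∧
      C.Represents (G - 2 • E) (D - E) (compressedBlock hn' (X.submatrix σ τ) ρ) := by
  obtain ⟨u, v, hu, hsu, hv, hsv, hX⟩ := hXD
  let ι : Fin e ⊕ Fin n → Fin n' := fun p => finCongr hn'.symm (finSumFinEquiv p)
  have hι : Function.Injective ι := (finCongr hn'.symm).injective.comp finSumFinEquiv.injective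
  have hblocks : asBlocks hn' (X.submatrix σ τ) = vecMulVec (u ∘ σ ∘ ι) (v ∘ τ ∘ ι) := by
    ext p q
    simp [asBlocks, hX, vecMulVec_apply, ι]
  rw [hblocks] at hdet
  rw [compressedBlock_eq_vecMulVec_eliminate hn' ρ hblocks]
  have hu' : ∀ p, (u ∘ σ ∘ ι) p ∈ C.RR D := fun p => hsu ▸ Submodule.subset_span ⟨_, rfl⟩
  have hv' : ∀ p, (v ∘ τ ∘ ι) p ∈ C.RR (G - D) := fun p => hsv ▸ Submodule.subset_span ⟨_, rfl⟩
  obtain ⟨hU, hV⟩ := hρ.eliminate_mem_RR (by rw [hD, hG]) hu' hv' (by simpa using he) hdet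
  set B := (LinearMap.mul k C.F).compr₂ ρ
  have hrank {D' : C.Point →₀ ℤ} (h : C.deg D' = s - C.deg E) : Module.finrank k (C.RR D') = n :=
    finrank_RR_eq (by omega) (by omega)
  have : NeZero n := ⟨by omega⟩
  have hliU := B.linearIndependent_eliminate (hu.comp _ (σ.injective.comp hι)) (v ∘ τ ∘ ι)
  have hliV := B.flip.linearIndependent_eliminate (hv.comp _ (τ.injective.comp hι)) (u ∘ σ ∘ ι)
  refine isGForm_and_represents_vecMulVec hliU ?_ hliV ?_
  · exact Submodule.span_range_eq_of_finrank_le hU hliU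
      (by rw [hrank (by rw [deg_sub, hD])]; simp)
  · rw [show G - 2 • E - (D - E) = G - D - E by abel]
    exact Submodule.span_range_eq_of_finrank_le hV hliV
      (by rw [hrank (by rw [deg_sub, deg_sub, hD, hG]; ring)]; simp)

open AbstractCurve in
/-- In the compression situation (`deg G = 2s` even, `E > 0`,
`s - deg E ≥ 2g`, `n = s - deg E - g + 1`, `n' = n + deg E`, `ρ` an `E`-compression
functional, `D` of degree `s`, `X` a `G`-form representing `D`), for **any** `n' × n'`
permutation matrices `P`, `Q` such that in `P X Q = [[a, b], [c, d]]` (`a` of size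
`deg E × deg E`) the matrix `ρ a` has nonzero determinant, the block `z` defined by
`[[w, x], [y, z]] = [[1, 0], [-(ρc)(ρa)⁻¹, 1]] · [[a, b], [c, d]] · [[1, -(ρa)⁻¹(ρb)], [0, 1]]`
is a `(G - 2E)`-form representing `D - E`. -/
theorem compression_block_gform (k : Type) [Field k] [IsAlgClosed k]
    (C : AbstractCurve k) (G E : C.Point →₀ ℤ) (s : ℤ)
    (hG : C.deg G = 2 * s) (hE : 0 ≤ E) (hE0 : E ≠ 0)
    (hge : 2 * (C.genus : ℤ) ≤ s - C.deg E)
    (e n n' : ℕ) (he : (e : ℤ) = C.deg E)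
    (hn : (n : ℤ) = s - C.deg E - C.genus + 1) (hn' : n' = e + n)
    (ρ : C.F →ₗ[k] k) (hρ : C.IsCompression G E ρ)
    (D : C.Point →₀ ℤ) (hD : C.deg D = s)
    (X : Matrix (Fin n') (Fin n') C.F) (hX : C.IsGForm G X) (hXD : C.Represents G D X)
    (σ τ : Equiv.Perm (Fin n'))
    (hdet : ((asBlocks hn' (X.submatrix σ τ)).toBlocks₁₁.map ρ).det ≠ 0) :
    C.IsGForm (G - 2 • E) (compressedBlock hn' (X.submatrix σ τ) ρ) ∧
      C.Represents (G - 2 • E) (D - E) (compressedBlock hn' (X.submatrix σ τ) ρ) :=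
  compression_block_gform_general k C G E s hG hge e n n' he hn hn' ρ hρ D hD X hXD σ τ hdet
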